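/- Let G₁, G₂, G₃ be the cyclic subgroups of G_{123} generated by a₁, a₂, a₃, let G_{12} and G_{23} be the subgroups of G_{123} generated by {a₁,a₂} and {a₂,a₃} respectively, and let F_{13} be the subgroup of G_{123} generated by {a₁,a₃}. Let t ≥ 1 and let g₁, …, g_t ∈ G_{123} be a Britton-reduced sequence: each g_j ∈ G_{12} ∪ G_{23}, for 1 ≤ j < t the memberships alternate (g_j ∈ G_{12} if and only if g_{j+1} ∈ G_{23}), and if t ≥ 2 then g_j ∉ G₂ for all j. Then g₁·g₂⋯g_t ∈ F_{13} if and only if there exists a sequence h₀, h₁, …, h_t with h₀ = h_t = 1, h_j ∈ G₂ for all j, and for each 1 ≤ j ≤ t there exists g′_j ∈ G₁ ∪ G₃ with h_{j−1}·g_j = g′_j·h_j. -/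

import Mathlib

/-!
`G_{123}` is the amalgamated product `G_{12} *_{G₂} G_{23}` of two copies of
`BS(1,2) = ⟨u, v ∣ v u v⁻¹ = u²⟩`, glued along `⟨v⟩` in the first copy and `⟨u⟩` in the second.
In `BS(1,2)` the cyclic subgroups `⟨u⟩` and `⟨v⟩` meet trivially (let `u` act on `ℚ` by
`x ↦ x + 1` and `v` by `x ↦ 2x`), so `G₁` and `G₃` meet `G₂` trivially and every element of
`F_{13}` is the product of a reduced sequence with letters in `G₁ ∪ G₃`. By Britton's lemma two
reduced sequences with the same product have the same length and differ letter by letter by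
elements of `G₂`, which gives the `h_j`. The converse is a telescoping product.
-/

/-- The relators of the group G_{123} = ⟨a₁, a₂, a₃ ∣ a₂a₁a₂⁻¹ = a₁², a₃a₂a₃⁻¹ = a₂²⟩
(generator of index `i` standing for `a_{i+1}`). The group G_{341} = ⟨a₃, a₄, a₁ ∣
a₄a₃a₄⁻¹ = a₃², a₁a₄a₁⁻¹ = a₄²⟩ has the same presentation, with the generator of
index `0` standing for `a₃`, index `1` for `a₄` and index `2` for `a₁`. -/
def chainRels : Set (FreeGroup (Fin 3)) :=
  {FreeGroup.of 1 * FreeGroup.of 0 * (FreeGroup.of 1)⁻¹ * (FreeGroup.of 0 * FreeGroup.of 0)⁻¹,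
   FreeGroup.of 2 * FreeGroup.of 1 * (FreeGroup.of 2)⁻¹ * (FreeGroup.of 1 * FreeGroup.of 1)⁻¹}

/-- The group G_{123} (and also, under a different reading of the generators, G_{341}). -/
abbrev Gchain : Type := PresentedGroup chainRels

/-- The generators of G_{123} (resp. G_{341}). -/
def cgen (i : Fin 3) : Gchain := PresentedGroup.of i

/-- The cyclic subgroup G₁ = ⟨a₁⟩ of G_{123}. -/
def G1 : Subgroup Gchain := Subgroup.zpowers (cgen 0)

/-- The cyclic subgroup G₂ = ⟨a₂⟩ of G_{123}. -/
def G2 : Subgroup Gchain := Subgroup.zpowers (cgen 1)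

/-- The cyclic subgroup G₃ = ⟨a₃⟩ of G_{123}. -/
def G3 : Subgroup Gchain := Subgroup.zpowers (cgen 2)

/-- The subgroup G_{12} = ⟨a₁, a₂⟩ of G_{123}. -/
def G12 : Subgroup Gchain := Subgroup.closure {cgen 0, cgen 1}

/-- The subgroup G_{23} = ⟨a₂, a₃⟩ of G_{123}. -/
def G23 : Subgroup Gchain := Subgroup.closure {cgen 1, cgen 2}

/-- The (free) subgroup F_{13} = ⟨a₁, a₃⟩ of G_{123}. -/
def F13 : Subgroup Gchain := Subgroup.closure {cgen 0, cgen 2}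

section ReducedSeq

variable {G ι : Type*} [Group G] (A : ι → Subgroup G) (C : Subgroup G)

structure IsReducedSeq (L : List (ι × G)) : Prop where
  mem : ∀ p ∈ L, p.2 ∈ A p.1
  not_mem : ∀ p ∈ L, p.2 ∉ C
  chain : L.IsChain fun p q => p.1 ≠ q.1

def BrittonProperty : Prop :=
  ∀ L : List (ι × G), IsReducedSeq A C L → (L.map Prod.snd).prod ∈ C → L = []

variable {A C}

theorem IsReducedSeq.nil : IsReducedSeq A C [] := ⟨by simp, by simp, .nil⟩

theorem isReducedSeq_cons {p : ι × G} {L : List (ι × G)} :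
    IsReducedSeq A C (p :: L) ↔
      p.2 ∈ A p.1 ∧ p.2 ∉ C ∧ (∀ q ∈ L.head?, p.1 ≠ q.1) ∧ IsReducedSeq A C L := by
  constructor
  · rintro ⟨hA, hC, hch⟩
    exact ⟨hA p List.mem_cons_self, hC p List.mem_cons_self, (List.isChain_cons.1 hch).1,
      fun q hq => hA q (List.mem_cons_of_mem _ hq), fun q hq => hC q (List.mem_cons_of_mem _ hq),
      hch.tail⟩
  · rintro ⟨hpA, hpC, hhead, hA, hC, hch⟩
    refine ⟨?_, ?_, List.isChain_cons.2 ⟨hhead, hch⟩⟩ <;>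
      simp only [List.mem_cons, forall_eq_or_imp] <;> tauto

theorem IsReducedSeq.of_cons {p : ι × G} {L : List (ι × G)} (h : IsReducedSeq A C (p :: L)) :
    IsReducedSeq A C L :=
  (isReducedSeq_cons.1 h).2.2.2

theorem IsReducedSeq.replace_head {i : ι} {x y : G} {L : List (ι × G)}
    (h : IsReducedSeq A C ((i, x) :: L)) (hyA : y ∈ A i) (hyC : y ∉ C) :
    IsReducedSeq A C ((i, y) :: L) :=
  isReducedSeq_cons.2 ⟨hyA, hyC, (isReducedSeq_cons.1 h).2.2⟩

theorem IsReducedSeq.append {L M : List (ι × G)} (hL : IsReducedSeq A C L)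
    (hM : IsReducedSeq A C M) (h : ∀ p ∈ L.getLast?, ∀ q ∈ M.head?, p.1 ≠ q.1) :
    IsReducedSeq A C (L ++ M) where
  mem p hp := (List.mem_append.1 hp).elim (hL.mem p) (hM.mem p)
  not_mem p hp := (List.mem_append.1 hp).elim (hL.not_mem p) (hM.not_mem p)
  chain := List.isChain_append.2 ⟨hL.chain, hM.chain, h⟩

theorem IsReducedSeq.reverse_inv {L : List (ι × G)} (h : IsReducedSeq A C L) :
    IsReducedSeq A C (L.map fun p => (p.1, p.2⁻¹)).reverse where
  mem p hp := by
    obtain ⟨q, hq, rfl⟩ := List.mem_map.1 (List.mem_reverse.1 hp)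
    exact inv_mem (h.mem q hq)
  not_mem p hp := by
    obtain ⟨q, hq, rfl⟩ := List.mem_map.1 (List.mem_reverse.1 hp)
    exact fun hC => h.not_mem q hq (inv_mem_iff.1 hC)
  chain := by
    rw [List.isChain_reverse, List.isChain_map]
    exact h.chain.imp fun _ _ hne => hne.symm

theorem prod_reverse_inv (L : List (ι × G)) :
    (((L.map fun p => (p.1, p.2⁻¹)).reverse).map Prod.snd).prod = (L.map Prod.snd).prod⁻¹ := by
  rw [List.prod_inv_reverse, List.map_reverse, List.map_map, List.map_map]
  rfl

theorem IsReducedSeq.exists_mul {K : ι → Subgroup G} (hKA : ∀ i, K i ≤ A i)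
    (hKC : ∀ i, Disjoint (K i) C) {L : List (ι × G)} (hL : IsReducedSeq A C L)
    (hLK : ∀ p ∈ L, p.2 ∈ K p.1) {i : ι} {x : G} (hx : x ∈ K i) :
    ∃ L' : List (ι × G), IsReducedSeq A C L' ∧ (∀ p ∈ L', p.2 ∈ K p.1) ∧
      (L'.map Prod.snd).prod = x * (L.map Prod.snd).prod := by
  have hC : ∀ {i y}, y ∈ K i → y ≠ 1 → y ∉ C := fun hy hy1 hyC =>
    hy1 (Subgroup.disjoint_def.1 (hKC _) hy hyC)
  by_cases hx1 : x = 1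
  · exact ⟨L, hL, hLK, by simp [hx1]⟩
  rcases L with _ | ⟨⟨j, y⟩, L⟩
  · exact ⟨[(i, x)], isReducedSeq_cons.2 ⟨hKA i hx, hC hx hx1, by simp, .nil⟩, by simpa using hx,
      by simp⟩
  have hLK' : ∀ p ∈ L, p.2 ∈ K p.1 := fun p hp => hLK p (List.mem_cons_of_mem _ hp)
  by_cases hij : j = i
  · subst hij
    have hxy : x * y ∈ K j := mul_mem hx (hLK _ List.mem_cons_self)
    by_cases hxy1 : x * y = 1
    · exact ⟨L, hL.of_cons, hLK', by simp [← mul_assoc, hxy1]⟩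
    · exact ⟨(j, x * y) :: L, hL.replace_head (hKA j hxy) (hC hxy hxy1),
        by simpa [hxy] using hLK', by simp [mul_assoc]⟩
  · exact ⟨(i, x) :: (j, y) :: L,
      isReducedSeq_cons.2 ⟨hKA i hx, hC hx hx1, by simpa using Ne.symm hij, hL⟩,
      by simpa [hx] using hLK, by simp⟩

theorem exists_isReducedSeq_of_mem_iSup {K : ι → Subgroup G} (hKA : ∀ i, K i ≤ A i)
    (hKC : ∀ i, Disjoint (K i) C) {x : G} (hx : x ∈ ⨆ i, K i) :
    ∃ L : List (ι × G), IsReducedSeq A C L ∧ (∀ p ∈ L, p.2 ∈ K p.1) ∧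
      (L.map Prod.snd).prod = x := by
  let NF : Set G :=
    {y | ∃ L : List (ι × G), IsReducedSeq A C L ∧ (∀ p ∈ L, p.2 ∈ K p.1) ∧
      (L.map Prod.snd).prod = y}
  suffices h : ∀ y ∈ NF, x * y ∈ NF from mul_one x ▸ h 1 ⟨[], .nil, by simp, rfl⟩
  refine Subgroup.iSup_induction K (C := fun x => ∀ y ∈ NF, x * y ∈ NF) hx
    (fun _ z hz y ⟨L, hL, hLK, hy⟩ => hy ▸ hL.exists_mul hKA hKC hLK hz)
    (fun y hy => (one_mul y).symm ▸ hy)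
    fun z z' hz hz' y hy => (mul_assoc z z' y).symm ▸ hz _ (hz' y hy)

open Classical in
theorem isReducedSeq_of_alternating {P Q : Subgroup G} (hPQ : P ⊓ Q ≤ C) {t : ℕ} {g : ℕ → G}
    (hmem : ∀ j < t, g j ∈ (P : Set G) ∪ (Q : Set G))
    (halt : ∀ j, j + 1 < t → (g j ∈ P ↔ g (j + 1) ∈ Q)) (hC : ∀ j < t, g j ∉ C) :
    IsReducedSeq (fun b : Bool => bif b then Q else P) C
      ((List.range t).map fun j => (decide (g j ∉ P), g j)) where
  mem p hp := by
    obtain ⟨j, hj, rfl⟩ := List.mem_map.1 hp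
    by_cases hjP : g j ∈ P
    · simp [hjP]
    · simpa [hjP] using (hmem j (List.mem_range.1 hj)).resolve_left hjP
  not_mem p hp := by
    obtain ⟨j, hj, rfl⟩ := List.mem_map.1 hp
    exact hC j (List.mem_range.1 hj)
  chain := by
    rw [List.isChain_map]
    rcases t with _ | t
    · simp
    rw [List.isChain_range_succ]
    intro j hj
    by_cases hjP : g j ∈ P
    · have hQ : g (j + 1) ∈ Q := (halt j (by omega)).1 hjP
      have hP : g (j + 1) ∉ P := fun hP => hC (j + 1) (by omega) (hPQ ⟨hP, hQ⟩)
      simp [hjP, hP]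
    · have hP : g (j + 1) ∈ P := ((hmem (j + 1) (by omega)).resolve_right
        fun hQ => hjP ((halt j (by omega)).2 hQ))
      simp [hjP, hP]

theorem mul_prod_range_mul_inv_mem {S : Subgroup G} {g h : ℕ → G} {n : ℕ}
    (hS : ∀ j < n, h j * g j * (h (j + 1))⁻¹ ∈ S) :
    h 0 * ((List.range n).map g).prod * (h n)⁻¹ ∈ S := by
  induction n with
  | zero => simp
  | succ n ih =>
    have := mul_mem (ih fun j hj => hS j (by omega)) (hS n (by omega))
    simpa [List.range_succ, mul_assoc] using this

theorem Subgroup.eq_comap_of_leftInverse {G' : Type*} [Group G'] {f : G →* G'} {r : G' →* G}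
    (hfr : Function.LeftInverse r f) {S : Subgroup G} {T : Subgroup G'} (hST : S.map f ≤ T)
    (hTS : T.map r ≤ S) : S = T.comap f :=
  le_antisymm (Subgroup.map_le_iff_le_comap.1 hST) fun x hx => hfr x ▸ hTS ⟨f x, hx, rfl⟩

namespace BrittonProperty

theorem comap (hB : BrittonProperty A C) {G' : Type*} [Group G'] (f : G' →* G) :
    BrittonProperty (fun i => (A i).comap f) (C.comap f) := by
  intro L hL hprod
  have hred : IsReducedSeq A C (L.map fun p => (p.1, f p.2)) := by
    refine ⟨fun p hp => ?_, fun p hp => ?_, (List.isChain_map _).2 hL.chain⟩ <;>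
      obtain ⟨q, hq, rfl⟩ := List.mem_map.1 hp
    exacts [hL.mem q hq, hL.not_mem q hq]
  simpa using hB _ hred (by simpa [map_list_prod, List.map_map, Function.comp_def] using hprod)

theorem eq_nil_of_prod_eq_one (hB : BrittonProperty A C) {L : List (ι × G)}
    (hL : IsReducedSeq A C L) (h : (L.map Prod.snd).prod = 1) : L = [] :=
  hB L hL (h ▸ C.one_mem)

theorem inf_le (hB : BrittonProperty A C) {i j : ι} (hij : i ≠ j) : A i ⊓ A j ≤ C := by
  intro x ⟨hi, hj⟩
  by_contra hx
  have hred : IsReducedSeq A C [(i, x), (j, x⁻¹)] :=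
    isReducedSeq_cons.2 ⟨hi, hx, by simpa using hij,
      isReducedSeq_cons.2 ⟨inv_mem hj, fun h => hx (inv_mem_iff.1 h), by simp, .nil⟩⟩
  simpa using hB.eq_nil_of_prod_eq_one hred (by simp)

theorem inv_mul_mem_of_prod_eq (hB : BrittonProperty A C) {l m : ι × G} {L M : List (ι × G)}
    (hL : IsReducedSeq A C (l :: L)) (hM : IsReducedSeq A C (m :: M))
    (h : ((l :: L).map Prod.snd).prod = ((m :: M).map Prod.snd).prod) : l.2⁻¹ * m.2 ∈ C := by
  simp only [List.map_cons, List.prod_cons] at h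
  obtain ⟨hlA, -, hlL, hL'⟩ := isReducedSeq_cons.1 hL
  by_cases hlm : l.1 = m.1
  · by_contra hk
    have hk' : l.2⁻¹ * m.2 ∈ A m.1 := mul_mem (inv_mem (hlm ▸ hlA)) (hM.mem m List.mem_cons_self)
    have hred : IsReducedSeq A C
        ((L.map fun p => (p.1, p.2⁻¹)).reverse ++ (m.1, l.2⁻¹ * m.2) :: M) := by
      refine hL'.reverse_inv.append (hM.replace_head hk' hk) ?_
      intro p hp q hq
      rw [List.getLast?_reverse, List.head?_map] at hp
      obtain ⟨r, hr, rfl⟩ := Option.map_eq_some_iff.1 hp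
      obtain rfl : q = _ := (Option.some_inj.1 hq).symm
      exact hlm ▸ (hlL r hr).symm
    have := hB.eq_nil_of_prod_eq_one hred (by
      rw [List.map_append, List.prod_append, prod_reverse_inv, List.map_cons, List.prod_cons,
        inv_mul_eq_one, mul_assoc, eq_inv_mul_iff_mul_eq, h])
    simp at this
  · have hred : IsReducedSeq A C (((l :: L).map fun p => (p.1, p.2⁻¹)).reverse ++ m :: M) := by
      refine hL.reverse_inv.append hM ?_
      rintro _ hp _ hq
      simp only [List.map_cons, List.reverse_cons, List.getLast?_append, List.getLast?_singleton,
        Option.some_or, List.head?_cons, Option.mem_def, Option.some.injEq] at hp hq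
      exact hp ▸ hq ▸ hlm
    have := hB.eq_nil_of_prod_eq_one hred (by
      rw [List.map_append, List.prod_append, prod_reverse_inv]
      simp [h])
    simp at this

/-- Stated for `∏ L = c * ∏ M` with `c ∈ C` so that the induction can pass the defect
`l⁻¹ c m ∈ C` of the first letters on to the tails. -/
theorem exists_interleaving (hB : BrittonProperty A C) (hCA : ∀ i, C ≤ A i)
    {L M : List (ι × G)} (hL : IsReducedSeq A C L) (hM : IsReducedSeq A C M) {c : G} (hc : c ∈ C)
    (hprod : (L.map Prod.snd).prod = c * (M.map Prod.snd).prod) :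
    L.length = M.length ∧ ∃ h : ℕ → G, h 0 = c ∧ h M.length = 1 ∧ (∀ j, h j ∈ C) ∧
      ∀ j (hjL : j < L.length) (hjM : j < M.length), h j * M[j].2 = L[j].2 * h (j + 1) := by
  induction M generalizing L c with
  | nil =>
    obtain rfl : L = [] := hB L hL (by simpa [hprod] using hc)
    obtain rfl : c = 1 := by simpa using hprod.symm
    exact ⟨rfl, fun _ => 1, rfl, rfl, fun _ => C.one_mem, fun j hj => by simp at hj⟩
  | cons m M ih =>
    have hcM : IsReducedSeq A C ((m.1, c * m.2) :: M) :=
      hM.replace_head (mul_mem (hCA _ hc) (hM.mem m List.mem_cons_self))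
        fun hcm => hM.not_mem m List.mem_cons_self ((C.mul_mem_cancel_left hc).1 hcm)
    rcases L with _ | ⟨l, L⟩
    · simpa using hB.eq_nil_of_prod_eq_one hcM (by simpa [mul_assoc] using hprod.symm)
    have hk := hB.inv_mul_mem_of_prod_eq hL hcM (by simpa [mul_assoc] using hprod)
    obtain ⟨hlen, h, h0, hlast, hC, hrel⟩ := ih hL.of_cons hM.of_cons hk (by
      simp only [List.map_cons, List.prod_cons] at hprod
      simp only [mul_assoc, ← hprod, inv_mul_cancel_left])
    refine ⟨by simp [hlen], fun | 0 => c | j + 1 => h j, rfl, hlast, ?_, ?_⟩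
    · rintro (_ | j)
      exacts [hc, hC j]
    · rintro (_ | j) hjL hjM
      · simp [h0]
      · simpa using hrel j _ _

theorem disjoint_iSup (hB : BrittonProperty A C) {K : ι → Subgroup G} (hKA : ∀ i, K i ≤ A i)
    (hKC : ∀ i, Disjoint (K i) C) : Disjoint (⨆ i, K i) C := by
  rw [Subgroup.disjoint_def]
  intro x hx hxC
  obtain ⟨L, hL, -, rfl⟩ := exists_isReducedSeq_of_mem_iSup hKA hKC hx
  rw [hB L hL hxC, List.map_nil, List.prod_nil]

end BrittonProperty

end ReducedSeq

open Monoid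

theorem Monoid.PushoutI.brittonProperty {ι H : Type*} {G : ι → Type*} [∀ i, Group (G i)]
    [Group H] {φ : ∀ i, H →* G i} (hφ : ∀ i, Function.Injective (φ i)) :
    BrittonProperty (fun i => (of (φ := φ) i).range) (base φ).range := by
  classical
  intro L hL hprod
  have hof : ∀ p ∈ L, of p.1 (Function.invFun (of (φ := φ) p.1) p.2) = p.2 :=
    fun p hp => Function.invFun_eq (hL.mem p hp)
  let w : CoprodI.Word G :=
    { toList := L.map fun p => ⟨p.1, Function.invFun (of (φ := φ) p.1) p.2⟩
      ne_one := by
        simp only [List.mem_map]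
        rintro _ ⟨p, hp, rfl⟩ h1
        refine hL.not_mem p hp ?_
        rw [← hof p hp, show Function.invFun (of (φ := φ) p.1) p.2 = 1 from h1, map_one]
        exact one_mem _
      chain_ne := (List.isChain_map _).2 hL.chain }
  have hred : Reduced φ w := by
    intro _ hg ⟨h, hh⟩
    obtain ⟨p, hp, rfl⟩ := List.mem_map.1 hg
    exact hL.not_mem p hp ⟨h, by rw [← of_apply_eq_base φ p.1, hh, hof p hp]⟩
  have hw : ofCoprodI w.prod = (L.map Prod.snd).prod := by
    simp only [w, CoprodI.Word.prod, List.map_map, map_list_prod]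
    exact congrArg List.prod (List.map_congr_left fun p hp => by simp [hof p hp])
  have := congrArg CoprodI.Word.toList (Reduced.eq_empty_of_mem_range hφ hred (hw ▸ hprod))
  simpa [w] using this

def bs12Rels : Set (FreeGroup Bool) :=
  {FreeGroup.of true * FreeGroup.of false * (FreeGroup.of true)⁻¹ *
    (FreeGroup.of false * FreeGroup.of false)⁻¹}

abbrev BS12 : Type := PresentedGroup bs12Rels

namespace BS12

def u : BS12 := PresentedGroup.of false

def v : BS12 := PresentedGroup.of true

def lift {K : Type*} [Group K] (x y : K) (h : y * x * y⁻¹ = x * x) : BS12 →* K :=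
  PresentedGroup.toGroup (f := fun b => bif b then y else x) <| by
    rintro _ rfl
    simpa only [map_mul, map_inv, FreeGroup.lift_apply_of, cond_true, cond_false] using
      mul_inv_eq_one.2 h

variable {K : Type*} [Group K] {x y : K} (hxy : y * x * y⁻¹ = x * x)

@[simp] theorem lift_u : lift x y hxy u = x := PresentedGroup.toGroup.of _

@[simp] theorem lift_v : lift x y hxy v = y := PresentedGroup.toGroup.of _

theorem range_lift : (lift x y hxy).range = Subgroup.closure {x, y} := by
  rw [MonoidHom.range_eq_map, ← PresentedGroup.closure_range_of, MonoidHom.map_closure,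
    ← Set.range_comp]
  congr 1
  ext z
  simp [lift, PresentedGroup.toGroup.of, eq_comm]

theorem v_mul_u_mul_v_inv : v * u * v⁻¹ = u * u :=
  mul_inv_eq_one.1 (PresentedGroup.one_of_mem rfl)

def toPerm : BS12 →* Equiv.Perm ℚ :=
  lift (Equiv.addRight 1) (Equiv.mulLeft₀ 2 two_ne_zero) <| by
    ext z
    simp only [Equiv.Perm.coe_mul, Function.comp_apply, Equiv.Perm.coe_inv, Equiv.coe_addRight,
      Equiv.mulLeft₀_apply, Equiv.mulLeft₀_symm_apply]
    ring

theorem toPerm_u_apply (z : ℚ) : toPerm u z = z + 1 := by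
  simp [toPerm]

theorem toPerm_v_apply (z : ℚ) : toPerm v z = 2 * z := by
  simp [toPerm]

theorem toPerm_u_zpow_apply (m : ℤ) (z : ℚ) : toPerm (u ^ m) z = z + m := by
  induction m using Int.induction_on generalizing z with
  | zero => simp
  | succ n ih =>
    rw [zpow_add_one, map_mul, Equiv.Perm.mul_apply, ih, toPerm_u_apply]
    push_cast
    ring
  | pred n ih =>
    have hinv : (toPerm u)⁻¹ z = z - 1 := by
      rw [Equiv.Perm.inv_eq_iff_eq, toPerm_u_apply, sub_add_cancel]
    rw [zpow_sub_one, map_mul, Equiv.Perm.mul_apply, map_inv, hinv, ih]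
    push_cast
    ring

theorem toPerm_v_zpow_apply (k : ℤ) (z : ℚ) : toPerm (v ^ k) z = 2 ^ k * z := by
  induction k using Int.induction_on generalizing z with
  | zero => simp
  | succ n ih =>
    rw [zpow_add_one, map_mul, Equiv.Perm.mul_apply, ih, toPerm_v_apply,
      zpow_add_one₀ two_ne_zero, mul_assoc]
  | pred n ih =>
    have hinv : (toPerm v)⁻¹ z = z / 2 := by
      rw [Equiv.Perm.inv_eq_iff_eq, toPerm_v_apply, mul_div_cancel₀ _ two_ne_zero]
    rw [zpow_sub_one, map_mul, Equiv.Perm.mul_apply, map_inv, hinv, ih, zpow_sub_one₀ two_ne_zero]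
    ring

theorem eq_zero_of_u_zpow_eq_v_zpow {m k : ℤ} (h : u ^ m = v ^ k) : m = 0 ∧ k = 0 := by
  have h0 := congrArg (toPerm · 0) h
  have h1 := congrArg (toPerm · 1) h
  simp only [toPerm_u_zpow_apply, toPerm_v_zpow_apply] at h0 h1
  have hm : m = 0 := by exact_mod_cast (by simpa using h0 : (m : ℚ) = 0)
  subst hm
  refine ⟨rfl, (zpow_eq_one_iff_right₀ (by norm_num : (0 : ℚ) ≤ 2) (by norm_num)).1 ?_⟩
  simpa using h1.symm

end BS12

namespace Gchain

open Monoid PushoutI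

theorem a2_mul_a1_mul_a2_inv : cgen 1 * cgen 0 * (cgen 1)⁻¹ = cgen 0 * cgen 0 :=
  mul_inv_eq_one.1 (PresentedGroup.one_of_mem (Set.mem_insert _ _))

theorem a3_mul_a2_mul_a3_inv : cgen 2 * cgen 1 * (cgen 2)⁻¹ = cgen 1 * cgen 1 :=
  mul_inv_eq_one.1 (PresentedGroup.one_of_mem (Set.mem_insert_of_mem _ rfl))

def lift {K : Type*} [Group K] (x y z : K) (h₁ : y * x * y⁻¹ = x * x)
    (h₂ : z * y * z⁻¹ = y * y) : Gchain →* K :=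
  PresentedGroup.toGroup (f := ![x, y, z]) <| by
    rintro _ (rfl | rfl)
    · simpa using mul_inv_eq_one.2 h₁
    · simpa using mul_inv_eq_one.2 h₂

@[simp] theorem lift_cgen {K : Type*} [Group K] {x y z : K} (h₁ : y * x * y⁻¹ = x * x)
    (h₂ : z * y * z⁻¹ = y * y) (i : Fin 3) : lift x y z h₁ h₂ (cgen i) = ![x, y, z] i :=
  PresentedGroup.toGroup.of _

/-- The copy `false` of `BS12` becomes `⟨a₁, a₂⟩` (with `a₂ = v`), the copy `true` becomes
`⟨a₂, a₃⟩` (with `a₂ = u`). -/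
def amalgamMap (b : Bool) : Multiplicative ℤ →* BS12 :=
  zpowersHom BS12 (bif b then BS12.u else BS12.v)

abbrev Amalgam : Type := PushoutI amalgamMap

theorem amalgamMap_injective (b : Bool) : Function.Injective (amalgamMap b) := by
  rw [injective_iff_map_eq_one]
  intro k hk
  cases b
  · exact toAdd_eq_zero.1
      (BS12.eq_zero_of_u_zpow_eq_v_zpow (m := 0) (by simpa [amalgamMap] using hk.symm)).2
  · exact toAdd_eq_zero.1
      (BS12.eq_zero_of_u_zpow_eq_v_zpow (k := 0) (by simpa [amalgamMap] using hk)).1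

theorem of_false_v : (of false BS12.v : Amalgam) = of true BS12.u := by
  simpa [amalgamMap] using
    (of_apply_eq_base amalgamMap false (.ofAdd 1)).trans (of_apply_eq_base amalgamMap true _).symm

def toAmalgam : Gchain →* Amalgam :=
  lift (of false BS12.u) (of false BS12.v) (of true BS12.v)
    (by rw [← map_inv, ← map_mul, ← map_mul, BS12.v_mul_u_mul_v_inv, map_mul])
    (by rw [of_false_v, ← map_inv, ← map_mul, ← map_mul, BS12.v_mul_u_mul_v_inv, map_mul])

def ofAmalgam : Amalgam →* Gchain :=
  PushoutI.lift
    (fun b => bif b then BS12.lift (cgen 1) (cgen 2) a3_mul_a2_mul_a3_inv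
      else BS12.lift (cgen 0) (cgen 1) a2_mul_a1_mul_a2_inv)
    (zpowersHom Gchain (cgen 1)) (by
      intro b
      ext
      cases b <;> simp [amalgamMap])

theorem ofAmalgam_toAmalgam (x : Gchain) : ofAmalgam (toAmalgam x) = x := by
  suffices ofAmalgam.comp toAmalgam = MonoidHom.id Gchain from DFunLike.congr_fun this x
  refine PresentedGroup.ext fun i => ?_
  change ofAmalgam (toAmalgam (cgen i)) = cgen i
  fin_cases i <;> simp [toAmalgam, ofAmalgam, lift_of]

theorem G12_eq_comap : G12 = (of (φ := amalgamMap) false).range.comap toAmalgam := by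
  refine Subgroup.eq_comap_of_leftInverse ofAmalgam_toAmalgam ?_ ?_
  · rw [G12, MonoidHom.map_closure, Subgroup.closure_le]
    simp [Set.insert_subset_iff, toAmalgam]
  · rintro _ ⟨_, ⟨b, rfl⟩, rfl⟩
    simp [ofAmalgam, lift_of, G12, ← BS12.range_lift a2_mul_a1_mul_a2_inv]

theorem G23_eq_comap : G23 = (of (φ := amalgamMap) true).range.comap toAmalgam := by
  refine Subgroup.eq_comap_of_leftInverse ofAmalgam_toAmalgam ?_ ?_
  · rw [G23, MonoidHom.map_closure, Subgroup.closure_le]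
    simp [Set.insert_subset_iff, toAmalgam, of_false_v]
  · rintro _ ⟨_, ⟨b, rfl⟩, rfl⟩
    simp [ofAmalgam, lift_of, G23, ← BS12.range_lift a3_mul_a2_mul_a3_inv]

theorem G2_eq_comap : G2 = (base amalgamMap).range.comap toAmalgam := by
  refine Subgroup.eq_comap_of_leftInverse ofAmalgam_toAmalgam ?_ ?_
  · rw [G2, MonoidHom.map_zpowers, Subgroup.zpowers_le]
    exact ⟨.ofAdd 1, by simp [toAmalgam, ← of_apply_eq_base amalgamMap false, amalgamMap]⟩
  · rintro _ ⟨_, ⟨k, rfl⟩, rfl⟩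
    simp [ofAmalgam, lift_base, G2]

theorem brittonProperty : BrittonProperty (fun b => bif b then G23 else G12) G2 := by
  convert (PushoutI.brittonProperty amalgamMap_injective).comap toAmalgam with b
  · cases b
    exacts [G12_eq_comap, G23_eq_comap]
  · exact G2_eq_comap

theorem disjoint_G1_G2 : Disjoint G1 G2 := by
  rw [Subgroup.disjoint_def]
  intro x h1 h2
  obtain ⟨m, rfl⟩ := Subgroup.mem_zpowers_iff.1 h1
  obtain ⟨k, hk⟩ := Subgroup.mem_zpowers_iff.1 h2
  have := congrArg toAmalgam hk
  rw [map_zpow, map_zpow] at this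
  simp only [toAmalgam, lift_cgen, Matrix.cons_val_zero, Matrix.cons_val_one] at this
  rw [← map_zpow, ← map_zpow] at this
  rw [(BS12.eq_zero_of_u_zpow_eq_v_zpow (of_injective amalgamMap_injective false this).symm).1,
    zpow_zero]

theorem disjoint_G3_G2 : Disjoint G3 G2 := by
  rw [Subgroup.disjoint_def]
  intro x h3 h2
  obtain ⟨m, rfl⟩ := Subgroup.mem_zpowers_iff.1 h3
  obtain ⟨k, hk⟩ := Subgroup.mem_zpowers_iff.1 h2
  have := congrArg toAmalgam hk
  rw [map_zpow, map_zpow] at this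
  simp only [toAmalgam, lift_cgen, Matrix.cons_val_one, Matrix.cons_val_two, Matrix.cons_val_zero,
    Matrix.head_cons, Matrix.tail_cons, of_false_v] at this
  rw [← map_zpow, ← map_zpow] at this
  rw [(BS12.eq_zero_of_u_zpow_eq_v_zpow (of_injective amalgamMap_injective true this)).2,
    zpow_zero]

theorem F13_eq_iSup : F13 = ⨆ b, bif b then G3 else G1 := by
  rw [iSup_bool_eq, cond_true, cond_false, F13, G1, G3, Set.insert_eq, Subgroup.closure_union,
    Subgroup.zpowers_eq_closure, Subgroup.zpowers_eq_closure, sup_comm]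

theorem letters_le_factor (b : Bool) : (bif b then G3 else G1) ≤ bif b then G23 else G12 := by
  cases b <;> exact Subgroup.zpowers_le.2 (Subgroup.subset_closure (by simp))

theorem G2_le_factor (b : Bool) : G2 ≤ bif b then G23 else G12 := by
  cases b <;> exact Subgroup.zpowers_le.2 (Subgroup.subset_closure (by simp))

theorem disjoint_letters_G2 (b : Bool) : Disjoint (bif b then G3 else G1) G2 := by
  cases b
  exacts [disjoint_G1_G2, disjoint_G3_G2]

theorem exists_isReducedSeq_of_mem_F13 {x : Gchain} (hx : x ∈ F13) :
    ∃ L : List (Bool × Gchain), IsReducedSeq (fun b => bif b then G23 else G12) G2 L ∧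
      (∀ p ∈ L, p.2 ∈ (G1 : Set Gchain) ∪ G3) ∧ (L.map Prod.snd).prod = x := by
  obtain ⟨L, hL, hLK, hprod⟩ :=
    exists_isReducedSeq_of_mem_iSup letters_le_factor disjoint_letters_G2 (F13_eq_iSup ▸ hx)
  refine ⟨L, hL, fun ⟨b, y⟩ hp => ?_, hprod⟩
  have := hLK _ hp
  cases b
  exacts [Or.inl this, Or.inr this]

theorem disjoint_F13_G2 : Disjoint F13 G2 :=
  F13_eq_iSup ▸ brittonProperty.disjoint_iSup letters_le_factor disjoint_letters_G2

theorem G1_union_G3_subset_F13 : (G1 : Set Gchain) ∪ G3 ⊆ F13 :=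
  Set.union_subset (Subgroup.zpowers_le.2 (Subgroup.subset_closure (by simp)))
    (Subgroup.zpowers_le.2 (Subgroup.subset_closure (by simp)))

end Gchain

theorem britton_reduced_mem_F13_iff_general
    (t : ℕ) (g : ℕ → Gchain)
    (hmem : ∀ j < t, g j ∈ (G12 : Set Gchain) ∪ (G23 : Set Gchain))
    (halt : ∀ j, j + 1 < t → (g j ∈ G12 ↔ g (j + 1) ∈ G23))
    (hred : 2 ≤ t → ∀ j < t, g j ∉ G2) :
    ((List.range t).map g).prod ∈ F13 ↔
      ∃ h : ℕ → Gchain, h 0 = 1 ∧ h t = 1 ∧ (∀ j ≤ t, h j ∈ G2) ∧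
        ∀ j < t, ∃ g' ∈ (G1 : Set Gchain) ∪ (G3 : Set Gchain),
          h j * g j = g' * h (j + 1) := by
  constructor
  · intro hF
    by_cases hC : ∀ j < t, g j ∉ G2
    · obtain ⟨L, hL, hLK, hLprod⟩ := Gchain.exists_isReducedSeq_of_mem_F13 hF
      obtain ⟨hlen, h, h0, hlast, hG2, hrel⟩ :=
        Gchain.brittonProperty.exists_interleaving Gchain.G2_le_factor hL
          (isReducedSeq_of_alternating (Gchain.brittonProperty.inf_le Bool.false_ne_true)
            hmem halt hC) G2.one_mem (by simp [hLprod, List.map_map, Function.comp_def])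
      simp only [List.length_map, List.length_range] at hlen hlast hrel
      exact ⟨h, h0, hlast, fun j _ => hG2 j, fun j hj =>
        ⟨L[j].2, hLK _ (List.getElem_mem _), by simpa using hrel j (by omega) hj⟩⟩
    · obtain ⟨j, hj, hjC⟩ : ∃ j < t, g j ∈ G2 := by simpa using hC
      obtain rfl : t = 1 := by
        by_contra
        exact hred (by omega) j hj hjC
      obtain rfl : j = 0 := by omega
      have hg0 : g 0 = 1 :=
        Subgroup.disjoint_def.1 Gchain.disjoint_F13_G2 (by simpa using hF) hjC
      exact ⟨1, rfl, rfl, fun _ _ => G2.one_mem,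
        fun j hj => ⟨1, Or.inl G1.one_mem, by simp [show j = 0 by omega, hg0]⟩⟩
  · rintro ⟨h, h0, ht, -, hrel⟩
    have hF : h 0 * ((List.range t).map g).prod * (h t)⁻¹ ∈ F13 :=
      mul_prod_range_mul_inv_mem fun j hj => by
        obtain ⟨g', hg', he⟩ := hrel j hj
        rw [he, mul_inv_cancel_right]
        exact Gchain.G1_union_G3_subset_F13 hg'
    simpa [h0, ht] using hF

/-- Let `g₁, …, g_t` (here `g 0, …, g (t-1)`) be a Britton-reduced sequence
in G_{123}: every `g_j ∈ G_{12} ∪ G_{23}`, consecutive elements alternate between `G_{12}` and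
`G_{23}`, and (if `t ≥ 2`) no `g_j` lies in `G₂`. Then `g₁⋯g_t ∈ F_{13}` if and only if there
is a sequence `h₀, …, h_t` with `h₀ = h_t = 1`, all `h_j ∈ G₂`, and such that each
`h_{j−1}·g_j` can be written as `g′_j·h_j` with `g′_j ∈ G₁ ∪ G₃`. -/
theorem britton_reduced_mem_F13_iff
    (t : ℕ) (ht : 1 ≤ t) (g : ℕ → Gchain)
    (hmem : ∀ j < t, g j ∈ (G12 : Set Gchain) ∪ (G23 : Set Gchain))
    (halt : ∀ j, j + 1 < t → (g j ∈ G12 ↔ g (j + 1) ∈ G23))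
    (hred : 2 ≤ t → ∀ j < t, g j ∉ G2) :
    ((List.range t).map g).prod ∈ F13 ↔
      ∃ h : ℕ → Gchain, h 0 = 1 ∧ h t = 1 ∧ (∀ j ≤ t, h j ∈ G2) ∧
        ∀ j < t, ∃ g' ∈ (G1 : Set Gchain) ∪ (G3 : Set Gchain),
          h j * g j = g' * h (j + 1) :=
  britton_reduced_mem_F13_iff_general t g hmem halt hred
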